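/- arXiv:2003.02432 — 3 statements merged into one kernel-verified Lean document; each statement's English description precedes it below -/
import Mathlib

section
/- Let F and G be functions on [a,b] that each agree almost everywhere with a non-decreasing function. If their generalized inverses F⁻¹ and G⁻¹ agree almost everywhere, then F = G almost everywhere. -/
/-!
`H⁻¹` is non-decreasing, and `t ↦ inf {x | t < H⁻¹ x}` is the right limit `H (t+)` of a
non-decreasing `H`. This infimum is taken over an upper set, so it does not change when `H⁻¹`
is modified on a null set; and it agrees with `H` off the countably many jumps of `H`. Hence `F̂`
and `Ĝ` coincide off a countable set.
-/

open MeasureTheory Set Filter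

noncomputable section

def genInv (a b : ℝ) (H : ℝ → ℝ) (x : ℝ) : ℝ :=
  sSup (insert a {t ∈ Icc a b | H t ≤ x})

def infInv (g : ℝ → ℝ) (t : ℝ) : ℝ :=
  sInf {x | t < g x}

end

section GenInv

variable {a b : ℝ} {H : ℝ → ℝ}

lemma bddAbove_genInv_set (a b : ℝ) (H : ℝ → ℝ) (x : ℝ) :
    BddAbove (insert a {t ∈ Icc a b | H t ≤ x}) :=
  (bddAbove_Icc.mono (sep_subset _ _)).insert a

lemma le_genInv {t x : ℝ} (ht : t ∈ Icc a b) (hx : H t ≤ x) : t ≤ genInv a b H x :=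
  le_csSup (bddAbove_genInv_set a b H x) (mem_insert_of_mem _ ⟨ht, hx⟩)

lemma le_of_lt_genInv (hH : MonotoneOn H (Icc a b)) {t x : ℝ} (ht : t ∈ Icc a b)
    (htx : t < genInv a b H x) : H t ≤ x := by
  obtain ⟨s, hs, hts⟩ := exists_lt_of_lt_csSup (insert_nonempty _ _) htx
  rcases hs with rfl | ⟨hs, hsx⟩
  · exact absurd ht.1 hts.not_ge
  · exact (hH ht hs hts.le).trans hsx

lemma monotone_genInv : Monotone (genInv a b H) := fun _ y hxy =>
  csSup_le_csSup (bddAbove_genInv_set a b H y) (insert_nonempty _ _)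
    (insert_subset_insert fun _ ⟨ht, htx⟩ => ⟨ht, htx.trans hxy⟩)

lemma isUpperSet_setOf_lt_genInv (t : ℝ) : IsUpperSet {x | t < genInv a b H x} :=
  fun _ _ hxy hx => hx.trans_le (monotone_genInv hxy)

lemma nonempty_setOf_lt_genInv {t : ℝ} (ht : t ∈ Ico a b) :
    {x | t < genInv a b H x}.Nonempty :=
  ⟨H b, ht.2.trans_le (le_genInv ⟨ht.1.trans ht.2.le, le_rfl⟩ le_rfl)⟩

lemma bddBelow_setOf_lt_genInv (hH : MonotoneOn H (Icc a b)) {t : ℝ} (ht : t ∈ Ico a b) :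
    BddBelow {x | t < genInv a b H x} :=
  ⟨H a, fun _ hx => le_of_lt_genInv hH (left_mem_Icc.2 (ht.1.trans ht.2.le)) (ht.1.trans_lt hx)⟩

lemma le_infInv_genInv (hH : MonotoneOn H (Icc a b)) {t : ℝ} (ht : t ∈ Ico a b) :
    H t ≤ infInv (genInv a b H) t :=
  le_csInf (nonempty_setOf_lt_genInv ht) fun _ hx => le_of_lt_genInv hH (Ico_subset_Icc_self ht) hx

lemma infInv_genInv_le (hH : MonotoneOn H (Icc a b)) {t s : ℝ} (ht : t ∈ Ico a b)
    (hs : s ∈ Icc a b) (hts : t < s) : infInv (genInv a b H) t ≤ H s :=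
  csInf_le (bddBelow_setOf_lt_genInv hH ht) (hts.trans_le (le_genInv hs le_rfl))

end GenInv

/-- The open intervals `(f t, g t)` are pairwise disjoint, and there are only countably many
disjoint nonempty open intervals in `ℝ`. -/
lemma countable_setOf_lt_of_forall_le_of_lt {α : Type*} [LinearOrder α] {s : Set α}
    {f g : α → ℝ} (hgap : ∀ t ∈ s, ∀ u ∈ s, t < u → g t ≤ f u) :
    {t ∈ s | f t < g t}.Countable := by
  have hdisj : ∀ t ∈ s, ∀ u ∈ s, t < u → Disjoint (Ioo (f t) (g t)) (Ioo (f u) (g u)) :=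
    fun t ht u hu htu => (Iio_disjoint_Ioi_of_le (hgap t ht u hu htu)).mono
      Ioo_subset_Iio_self Ioo_subset_Ioi_self
  refine PairwiseDisjoint.countable_of_isOpen (s := fun t => Ioo (f t) (g t))
    (fun t ht u hu hne => ?_) (fun _ _ => isOpen_Ioo) fun t ht => nonempty_Ioo.2 ht.2
  rcases hne.lt_or_gt with htu | hut
  exacts [hdisj t ht.1 u hu.1 htu, (hdisj u hu.1 t ht.1 hut).symm]

lemma IsUpperSet.csInf_le_csInf_of_measure_diff_eq_zero {S S' : Set ℝ} (hS : IsUpperSet S)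
    (hne : S.Nonempty) (hbdd : BddBelow S') (hdiff : volume (S \ S') = 0) :
    sInf S' ≤ sInf S := by
  by_contra! hlt
  have hsub : Ioo (sInf S) (sInf S') ⊆ S \ S' := fun x hx => by
    obtain ⟨s, hs, hsx⟩ := exists_lt_of_csInf_lt hne hx.1
    exact ⟨hS hsx.le hs, notMem_of_lt_csInf hx.2 hbdd⟩
  have hzero := measure_mono_null hsub hdiff
  rw [Real.volume_Ioo, ENNReal.ofReal_eq_zero] at hzero
  linarith

lemma IsUpperSet.csInf_eq_of_ae_eq {S S' : Set ℝ} (hS : IsUpperSet S) (hS' : IsUpperSet S')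
    (hne : S.Nonempty) (hne' : S'.Nonempty) (hbdd : BddBelow S) (hbdd' : BddBelow S')
    (h : S =ᵐ[volume] S') : sInf S = sInf S' :=
  le_antisymm (hS'.csInf_le_csInf_of_measure_diff_eq_zero hne' hbdd (ae_eq_set.1 h).2)
    (hS.csInf_le_csInf_of_measure_diff_eq_zero hne hbdd' (ae_eq_set.1 h).1)

section InfInv

variable {a b : ℝ} {F G H : ℝ → ℝ}

lemma infInv_genInv_congr_ae (hF : MonotoneOn F (Icc a b)) (hG : MonotoneOn G (Icc a b))
    (h : genInv a b F =ᵐ[volume] genInv a b G) {t : ℝ} (ht : t ∈ Ico a b) :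
    infInv (genInv a b F) t = infInv (genInv a b G) t :=
  (isUpperSet_setOf_lt_genInv t).csInf_eq_of_ae_eq (isUpperSet_setOf_lt_genInv t)
    (nonempty_setOf_lt_genInv ht) (nonempty_setOf_lt_genInv ht)
    (bddBelow_setOf_lt_genInv hF ht) (bddBelow_setOf_lt_genInv hG ht)
    (h.mono fun x hx => show (t < _) = (t < _) by rw [hx])

lemma ae_eq_infInv_genInv (hH : MonotoneOn H (Icc a b)) :
    ∀ᵐ t ∂volume.restrict (Ico a b), H t = infInv (genInv a b H) t := by
  have hjumps : {t ∈ Ico a b | H t < infInv (genInv a b H) t}.Countable :=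
    countable_setOf_lt_of_forall_le_of_lt fun t ht s hs hts =>
      infInv_genInv_le hH ht (Ico_subset_Icc_self hs) hts
  filter_upwards [ae_restrict_of_ae (hjumps.ae_notMem volume),
    ae_restrict_mem measurableSet_Ico] with t hnot ht
  exact (le_infInv_genInv hH ht).eq_of_not_lt fun hlt => hnot ⟨ht, hlt⟩

end InfInv

theorem stmt_1_general (a b : ℝ) (F G Fhat Ghat : ℝ → ℝ)
    (hFhat : MonotoneOn Fhat (Set.Icc a b)) (hGhat : MonotoneOn Ghat (Set.Icc a b))
    (hFae : ∀ᵐ t ∂(volume.restrict (Set.Icc a b)), F t = Fhat t)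
    (hGae : ∀ᵐ t ∂(volume.restrict (Set.Icc a b)), G t = Ghat t)
    (Finv Ginv : ℝ → ℝ)
    (hFinv : ∀ x, Finv x = sSup (insert a {t ∈ Set.Icc a b | Fhat t ≤ x}))
    (hGinv : ∀ x, Ginv x = sSup (insert a {t ∈ Set.Icc a b | Ghat t ≤ x}))
    (hinv : ∀ᵐ x ∂(volume : Measure ℝ), Finv x = Ginv x) :
    ∀ᵐ t ∂(volume.restrict (Set.Icc a b)), F t = G t := by
  obtain rfl : Finv = genInv a b Fhat := funext hFinv
  obtain rfl : Ginv = genInv a b Ghat := funext hGinv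
  rw [← Measure.restrict_congr_set Ico_ae_eq_Icc] at hFae hGae ⊢
  filter_upwards [hFae, hGae, ae_eq_infInv_genInv hFhat, ae_eq_infInv_genInv hGhat,
    ae_restrict_mem measurableSet_Ico] with t hFt hGt hF hG ht
  rw [hFt, hGt, hF, hG, infInv_genInv_congr_ae hFhat hGhat hinv ht]

/-- If F, G on [a,b] each agree a.e. with non-decreasing functions F̂, Ĝ, and their
generalized inverses (defined via F̂, Ĝ, with value a when the set is empty) agree a.e.,
then F = G a.e. on [a,b]. -/
theorem stmt_1 (a b : ℝ) (hab : a ≤ b) (F G Fhat Ghat : ℝ → ℝ)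
    (hFhat : MonotoneOn Fhat (Set.Icc a b)) (hGhat : MonotoneOn Ghat (Set.Icc a b))
    (hFae : ∀ᵐ t ∂(volume.restrict (Set.Icc a b)), F t = Fhat t)
    (hGae : ∀ᵐ t ∂(volume.restrict (Set.Icc a b)), G t = Ghat t)
    (Finv Ginv : ℝ → ℝ)
    (hFinv : ∀ x, Finv x = sSup (insert a {t ∈ Set.Icc a b | Fhat t ≤ x}))
    (hGinv : ∀ x, Ginv x = sSup (insert a {t ∈ Set.Icc a b | Ghat t ≤ x}))
    (hinv : ∀ᵐ x ∂(volume : Measure ℝ), Finv x = Ginv x) :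
    ∀ᵐ t ∂(volume.restrict (Set.Icc a b)), F t = G t :=
  stmt_1_general a b F G Fhat Ghat hFhat hGhat hFae hGae Finv Ginv hFinv hGinv hinv
end

section
/- For z in the open unit disk, the identity Σ_{n≥1} (−8i/π)·(n/(1 − 4n²))·zⁿ = (i/π)·{ Log((1 + √z)/(1 − √z))·(√z + 1/√z) − 2 } holds, where √z is a branch of the square root analytic on the disk slit along the negative reals, for z not on the slit and z ≠ 0. -/
open Complex Real

/-!
Write `w = √z`, so that `w ^ 2 = z` and `‖w‖ < 1`. Partial fractions give
`-8m / (1 - 4m²) = 2 / (2m - 1) + 2 / (2m + 1)`, which splits the series into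
`w · A(w) + w⁻¹ · (A(w) - 2w)` with `A(w) = ∑ 2 w^(2k+1) / (2k+1) = log (1 + w) - log (1 - w)`,
the odd part of the Taylor series of `-log (1 - w)`. Since `1 ± w` lie in the right half-plane,
`A(w) = Log ((1 + w) / (1 - w))`.
-/

namespace Complex

theorem log_one_add_div_one_sub {w : ℂ} (hw : ‖w‖ < 1) :
    log ((1 + w) / (1 - w)) = log (1 + w) - log (1 - w) := by
  -- `hasSum_arctan_aux` is this identity for `z * I = w`.
  have h := hasSum_arctan_aux (z := -I * w) (by simpa using hw)
  rwa [show -I * w * I = w by ring_nf; simp, ← sub_eq_add_neg, eq_comm] at h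

theorem hasSum_log_sub_log {w : ℂ} (hw : ‖w‖ < 1) :
    HasSum (fun k : ℕ => 2 * w ^ (2 * k + 1) / (2 * k + 1)) (log (1 + w) - log (1 - w)) := by
  have h := (hasSum_taylorSeries_neg_log hw).sub
    (hasSum_taylorSeries_neg_log (z := -w) (by simpa using hw))
  rw [sub_neg_eq_add, sub_neg_eq_add, neg_add_eq_sub] at h
  have hodd : Function.Injective (fun k : ℕ => 2 * k + 1) := fun a b h => by simpa using h
  rw [← hodd.hasSum_iff] at h
  · refine h.congr_fun fun k => ?_
    simp only [Function.comp_apply, Odd.neg_pow ⟨k, rfl⟩]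
    push_cast
    ring
  · intro n hn
    have hev : Even n := by
      rw [← Nat.not_odd_iff_even]
      rintro ⟨k, rfl⟩
      exact hn ⟨k, rfl⟩
    simp [hev.neg_pow]

theorem hasSum_log_sub_log_mul_add_inv {w : ℂ} (hw : ‖w‖ < 1) (hw0 : w ≠ 0) :
    HasSum (fun n : ℕ => (2 / (2 * n + 1) + 2 / (2 * n + 3)) * (w ^ 2) ^ (n + 1))
      ((log (1 + w) - log (1 - w)) * (w + w⁻¹) - 2) := by
  have hS := hasSum_log_sub_log hw
  have hT := (hasSum_nat_add_iff' 1).mpr hS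
  have hsum := (hS.mul_left w).add (hT.mul_left w⁻¹)
  rw [show ∀ L : ℂ, w * L + w⁻¹ * (L - ∑ k ∈ Finset.range 1, 2 * w ^ (2 * k + 1) / (2 * k + 1))
      = L * (w + w⁻¹) - 2 by intro L; norm_num; field_simp; ring] at hsum
  refine hsum.congr_fun fun n => ?_
  push_cast
  field_simp
  ring

end Complex

theorem neg_eight_mul_div_one_sub_four_mul_sq (n : ℕ) :
    -8 * ((n : ℂ) + 1) / (1 - 4 * ((n : ℂ) + 1) ^ 2) = 2 / (2 * n + 1) + 2 / (2 * n + 3) := by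
  have h1 : (2 * n + 1 : ℂ) ≠ 0 := by norm_cast
  have h3 : (2 * n + 3 : ℂ) ≠ 0 := by norm_cast
  have h13 : (1 : ℂ) - 4 * (n + 1) ^ 2 ≠ 0 := by
    rw [show (1 : ℂ) - 4 * (n + 1) ^ 2 = -((2 * n + 1) * (2 * n + 3)) by ring]
    exact neg_ne_zero.mpr (mul_ne_zero h1 h3)
  rw [div_add_div _ _ h1 h3, div_eq_div_iff h13 (mul_ne_zero h1 h3)]
  ring

theorem stmt_9_general (z : ℂ) (hz : z ∈ Metric.ball (0 : ℂ) 1) (hz0 : z ≠ 0) :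
    HasSum (fun n : ℕ =>
        (-8 * Complex.I / π) * (((n : ℂ) + 1) / (1 - 4 * ((n : ℂ) + 1) ^ 2)) * z ^ (n + 1))
      ((Complex.I / π) *
        (Complex.log ((1 + z ^ (1 / 2 : ℂ)) / (1 - z ^ (1 / 2 : ℂ)))
            * (z ^ (1 / 2 : ℂ) + 1 / z ^ (1 / 2 : ℂ)) - 2)) := by
  set w := z ^ (1 / 2 : ℂ)
  have hwz : w ^ 2 = z := by simp [w, one_div]
  have hw0 : w ≠ 0 := by rintro h; simp [h, eq_comm, hz0] at hwz
  have hw : ‖w‖ < 1 := by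
    rw [mem_ball_zero_iff, ← hwz, norm_pow] at hz
    exact (pow_lt_one_iff_of_nonneg (norm_nonneg w) two_ne_zero).mp hz
  rw [log_one_add_div_one_sub hw, one_div, ← hwz]
  refine (hasSum_log_sub_log_mul_add_inv hw hw0).mul_left (I / π) |>.congr_fun fun n => ?_
  rw [← neg_eight_mul_div_one_sub_four_mul_sq]
  ring

/-- For z in the open unit disk off the negative-real slit and z ≠ 0, with √z the
principal square root,
Σ_{n≥1} (−8i/π)(n/(1 − 4n²)) zⁿ = (i/π)(Log((1+√z)/(1−√z))·(√z + 1/√z) − 2). -/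
theorem stmt_9 (z : ℂ) (hz : z ∈ Metric.ball (0 : ℂ) 1) (hz0 : z ≠ 0)
    (hslit : ¬(z.im = 0 ∧ z.re ≤ 0)) :
    HasSum (fun n : ℕ =>
        (-8 * Complex.I / π) * (((n : ℂ) + 1) / (1 - 4 * ((n : ℂ) + 1) ^ 2)) * z ^ (n + 1))
      ((Complex.I / π) *
        (Complex.log ((1 + z ^ (1 / 2 : ℂ)) / (1 - z ^ (1 / 2 : ℂ)))
            * (z ^ (1 / 2 : ℂ) + 1 / z ^ (1 / 2 : ℂ)) - 2)) :=
  stmt_9_general z hz hz0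
end

section
/- The function f(z) = (2i/π²)·(Log((1 + √z)/(1 − √z)))² maps the open unit disk into the region above the parabola {x + iy : 2y > x² − 1}; moreover for θ ∈ (0, 2π), the boundary values satisfy Re[f(e^{iθ})]² = 2·Im[f(e^{iθ})] + 1. -/
/-!
Write `w = √z` and `L = Log ((1 + w) / (1 - w))`, so that `f z = (2i/π²) L²`. The Möbius map
`w ↦ (1 + w) / (1 - w)` sends the open unit disk onto the right half-plane and the unit circle
minus `±1` onto the imaginary axis minus `0`, so `|Im L| = |arg ((1 + w) / (1 - w))|` is `< π/2`
inside the disk and `= π/2` on its boundary. For `L = a + bi` the point `(2i/π²) L²` satisfies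
`2 Im + 1 - Re² = (π² - 4b²)(4a² + π²)/π⁴`, which is positive on the strip `|b| < π/2` and
vanishes on its boundary lines.
-/

open Complex Real

noncomputable def stripToParabola (L : ℂ) : ℂ := 2 * I / (π : ℂ) ^ 2 * L ^ 2

lemma stripToParabola_defect (L : ℂ) :
    2 * (stripToParabola L).im + 1 - (stripToParabola L).re ^ 2
      = (π ^ 2 - 4 * L.im ^ 2) * (4 * L.re ^ 2 + π ^ 2) / π ^ 4 := by
  have hπ : (π : ℂ) ^ 2 = ((π ^ 2 : ℝ) : ℂ) := by push_cast; rfl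
  simp only [stripToParabola, hπ, div_ofReal_re, div_ofReal_im, mul_re, mul_im, re_ofNat,
    im_ofNat, I_re, I_im, pow_two]
  field_simp
  ring

lemma stripToParabola_above {L : ℂ} (h : |L.im| < π / 2) :
    (stripToParabola L).re ^ 2 - 1 < 2 * (stripToParabola L).im := by
  have hb : 4 * L.im ^ 2 < π ^ 2 := by
    nlinarith [sq_abs L.im, abs_nonneg L.im]
  have hpos : 0 < (π ^ 2 - 4 * L.im ^ 2) * (4 * L.re ^ 2 + π ^ 2) / π ^ 4 :=
    div_pos (mul_pos (by linarith) (by positivity)) (by positivity)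
  linarith [stripToParabola_defect L]

lemma stripToParabola_boundary {L : ℂ} (h : |L.im| = π / 2) :
    (stripToParabola L).re ^ 2 = 2 * (stripToParabola L).im + 1 := by
  have hb : 4 * L.im ^ 2 = π ^ 2 := by
    rw [← sq_abs, h]; ring
  have hdefect := stripToParabola_defect L
  rw [hb, sub_self, zero_mul, zero_div] at hdefect
  linarith

lemma re_one_add_div_one_sub (w : ℂ) :
    ((1 + w) / (1 - w)).re = (1 - normSq w) / normSq (1 - w) := by
  simp only [div_re, normSq_apply, add_re, add_im, sub_re, sub_im, one_re, one_im]
  ring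

lemma abs_arg_one_add_div_one_sub_lt {w : ℂ} (hw : ‖w‖ < 1) :
    |arg ((1 + w) / (1 - w))| < π / 2 := by
  have hw1 : 1 - w ≠ 0 := sub_ne_zero.2 fun h ↦ by simp [← h] at hw
  have hnormSq : normSq w < 1 := by
    rw [← Complex.sq_norm]; nlinarith [norm_nonneg w]
  refine abs_arg_lt_pi_div_two_iff.2 (Or.inl ?_)
  rw [re_one_add_div_one_sub]
  exact div_pos (by linarith) (normSq_pos.2 hw1)

lemma abs_arg_eq_pi_div_two {z : ℂ} (hre : z.re = 0) (hz : z ≠ 0) : |arg z| = π / 2 :=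
  le_antisymm (abs_arg_le_pi_div_two_iff.2 hre.ge)
    (not_lt.1 fun h ↦ by simp [hre, hz] at h)

lemma abs_arg_one_add_div_one_sub_eq {w : ℂ} (hw : ‖w‖ = 1) (hw₁ : w ≠ 1) (hw₂ : w ≠ -1) :
    |arg ((1 + w) / (1 - w))| = π / 2 := by
  have hnum : 1 + w ≠ 0 := fun h ↦ hw₂ (eq_neg_of_add_eq_zero_right h)
  have hden : 1 - w ≠ 0 := sub_ne_zero.2 (Ne.symm hw₁)
  refine abs_arg_eq_pi_div_two ?_ (div_ne_zero hnum hden)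
  rw [re_one_add_div_one_sub, ← Complex.sq_norm, hw]
  simp

lemma norm_cpow_one_half (z : ℂ) : ‖z ^ (1 / 2 : ℂ)‖ = ‖z‖ ^ (1 / 2 : ℝ) := by
  simpa using norm_cpow_real z (1 / 2)

lemma cpow_one_half_sq (z : ℂ) : (z ^ (1 / 2 : ℂ)) ^ 2 = z := by
  simp

lemma exp_ofReal_mul_I_ne_one {θ : ℝ} (hθ : θ ∈ Set.Ioo 0 (2 * π)) : exp (θ * I) ≠ 1 := by
  intro h
  have hcos : Real.cos θ = 1 := by rw [← exp_ofReal_mul_I_re, h, one_re]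
  exact hθ.1.ne' ((cos_eq_one_iff_of_lt_of_lt (by linarith [hθ.1, pi_pos]) hθ.2).1 hcos)

/-- f(z) = (2i/π²)·(Log((1+√z)/(1−√z)))² maps the open unit disk into the region above
the parabola 2y = x² − 1, and on the boundary Re[f(e^{iθ})]² = 2 Im[f(e^{iθ})] + 1. -/
theorem stmt_14 (f : ℂ → ℂ)
    (hf : ∀ z, f z = (2 * Complex.I / (π : ℂ) ^ 2) *
        (Complex.log ((1 + z ^ (1 / 2 : ℂ)) / (1 - z ^ (1 / 2 : ℂ)))) ^ 2) :
    (∀ z ∈ Metric.ball (0 : ℂ) 1, 2 * (f z).im > (f z).re ^ 2 - 1) ∧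
      ∀ θ ∈ Set.Ioo (0 : ℝ) (2 * π),
        (f (Complex.exp (θ * Complex.I))).re ^ 2
          = 2 * (f (Complex.exp (θ * Complex.I))).im + 1 := by
  refine ⟨fun z hz ↦ ?_, fun θ hθ ↦ ?_⟩
  · rw [hf]
    refine stripToParabola_above ?_
    rw [log_im]
    refine abs_arg_one_add_div_one_sub_lt ?_
    rw [norm_cpow_one_half]
    exact rpow_lt_one (norm_nonneg z) (mem_ball_zero_iff.1 hz) one_half_pos
  · set z := exp (θ * I)
    have hz : ‖z‖ = 1 := norm_exp_ofReal_mul_I θ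
    have hsq : (z ^ (1 / 2 : ℂ)) ^ 2 ≠ 1 := by
      rw [cpow_one_half_sq]; exact exp_ofReal_mul_I_ne_one hθ
    rw [hf]
    refine stripToParabola_boundary ?_
    rw [log_im]
    refine abs_arg_one_add_div_one_sub_eq ?_
      (fun h ↦ hsq (by rw [h]; norm_num)) (fun h ↦ hsq (by rw [h]; norm_num))
    rw [norm_cpow_one_half, hz, one_rpow]
end
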